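/- Let (Ω, P) be a probability space, let s be a finite index set, and let g, (gᵢ)_{i∈s} be jointly independent random variables, each distributed as the exponential distribution with rate 1. Let c > 0, N₀ > 0, γ > 0 and nonnegative constants (cᵢ)_{i∈s}, and set I = ∑_{i∈s} cᵢ · gᵢ. Then P( {ω : c·g(ω)/(I(ω) + N₀) > γ} ) = exp(−γ N₀ / c) · ∏_{i∈s} 1 / (1 + γ cᵢ / c). -/

import Mathlib

open MeasureTheory ProbabilityTheory Real
open scoped ENNReal

lemma my_expMeasure_Iic {t : ℝ} (ht : 0 ≤ t) :
    expMeasure 1 (Set.Iic t) = ENNReal.ofReal (1 - Real.exp (-t)) := by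
  rw [expMeasure, gammaMeasure, withDensity_apply _ measurableSet_Iic]
  have := lintegral_exponentialPDF_eq_antiDeriv (r := 1) one_pos t
  simp only [exponentialPDF, exponentialPDFReal, gammaPDF, if_pos ht, one_mul] at this ⊢
  exact this

lemma my_expMeasure_Ioi {t : ℝ} (ht : 0 ≤ t) :
    expMeasure 1 (Set.Ioi t) = ENNReal.ofReal (Real.exp (-t)) := by
  haveI : IsProbabilityMeasure (expMeasure 1) := isProbabilityMeasure_expMeasure one_pos
  have h1 : Set.Ioi t = (Set.Iic t)ᶜ := (Set.compl_Iic).symm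
  rw [h1, measure_compl measurableSet_Iic (measure_ne_top _ _), my_expMeasure_Iic ht,
    measure_univ]
  rw [ENNReal.ofReal_sub _ (Real.exp_nonneg _), ENNReal.ofReal_one]
  rw [ENNReal.sub_sub_cancel ENNReal.one_ne_top (by
    rw [ENNReal.ofReal_le_one]
    exact Real.exp_le_one_iff.2 (by linarith))]

lemma my_expMeasure_Iio_zero : expMeasure 1 (Set.Iio 0) = 0 := by
  rw [expMeasure, gammaMeasure, withDensity_apply _ measurableSet_Iio]
  exact lintegral_gammaPDF_of_nonpos le_rfl

lemma my_laplace {b : ℝ} (hb : 0 ≤ b) :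
    ∫⁻ x, ENNReal.ofReal (Real.exp (-(b * x))) ∂(expMeasure 1)
      = ENNReal.ofReal (1 / (1 + b)) := by
  have h1b : (0:ℝ) < 1 + b := by linarith
  have hmg : Measurable (fun x : ℝ => ENNReal.ofReal (Real.exp (-(b * x)))) :=
    ENNReal.measurable_ofReal.comp ((measurable_id.const_mul b).neg.exp)
  have hmpdf : Measurable (gammaPDF 1 1) := by
    unfold gammaPDF
    exact ENNReal.measurable_ofReal.comp (measurable_gammaPDFReal 1 1)
  rw [expMeasure, gammaMeasure, lintegral_withDensity_eq_lintegral_mul _ hmpdf hmg]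
  have hker : ∀ x : ℝ, (gammaPDF 1 1 * fun x => ENNReal.ofReal (Real.exp (-(b * x)))) x
      = Set.indicator (Set.Ici (0:ℝ)) (fun x => ENNReal.ofReal (Real.exp (-((1 + b) * x)))) x := by
    intro x
    simp only [Pi.mul_apply]
    rcases lt_or_ge x 0 with hx | hx
    · rw [show gammaPDF 1 1 x = 0 from gammaPDF_of_neg hx,
        Set.indicator_of_notMem (by simpa using not_le.2 hx), zero_mul]
    · have hpdf : gammaPDF 1 1 x = ENNReal.ofReal (Real.exp (-x)) := by
        rw [gammaPDF, gammaPDFReal, if_pos hx]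
        norm_num
      rw [hpdf, Set.indicator_of_mem (Set.mem_Ici.2 hx),
        ← ENNReal.ofReal_mul (Real.exp_nonneg _), ← Real.exp_add]
      ring_nf
  rw [lintegral_congr hker, lintegral_indicator measurableSet_Ici _,
    ← setLIntegral_congr MeasureTheory.Ioi_ae_eq_Ici]
  rw [← ofReal_integral_eq_lintegral_ofReal]
  · congr 1
    have := integral_comp_mul_left_Ioi (fun x => Real.exp (-x)) 0 h1b
    simp only [mul_zero, integral_exp_neg_Ioi_zero, smul_eq_mul, mul_one] at this
    rw [this, one_div]
  · have h := exp_neg_integrableOn_Ioi 0 h1b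
    refine (integrable_congr ?_).1 h
    filter_upwards with x
    ring_nf
  · filter_upwards with x using Real.exp_nonneg _

lemma my_lintegral_prod {Ω' κ : Type*} [MeasurableSpace Ω'] {μ : Measure Ω'}
    [IsProbabilityMeasure μ] {f : κ → Ω' → ℝ≥0∞} (hf : ∀ j, Measurable (f j))
    (hind : iIndepFun f μ) (u : Finset κ) :
    ∫⁻ ω, ∏ j ∈ u, f j ω ∂μ = ∏ j ∈ u, ∫⁻ ω, f j ω ∂μ := by
  classical
  induction u using Finset.induction_on with
  | empty => simp
  | @insert k u hk ih =>
    simp only [Finset.prod_insert hk]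
    have hprod : Measurable (∏ j ∈ u, f j) := by
      rw [show (∏ j ∈ u, f j) = fun ω => ∏ j ∈ u, f j ω from funext fun ω => Finset.prod_apply ω u f]
      exact Finset.measurable_prod u fun j _ => hf j
    have hindep : IndepFun (f k) (∏ j ∈ u, f j) μ :=
      (hind.indepFun_finsetProd_of_notMem hf hk).symm
    calc ∫⁻ ω, f k ω * ∏ j ∈ u, f j ω ∂μ
        = ∫⁻ ω, (f k * ∏ j ∈ u, f j) ω ∂μ := by
          apply lintegral_congr; intro ω
          simp [Finset.prod_apply]
      _ = (∫⁻ ω, f k ω ∂μ) * ∫⁻ ω, (∏ j ∈ u, f j) ω ∂μ :=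
          lintegral_mul_eq_lintegral_mul_lintegral_of_indepFun (hf k) hprod hindep
      _ = (∫⁻ ω, f k ω ∂μ) * ∏ j ∈ u, ∫⁻ ω, f j ω ∂μ := by
          rw [← ih]
          congr 1
          exact lintegral_congr fun ω => Finset.prod_apply ω u f

/-- The analytic core of Theorem 1 and Lemmas 1–2 of the paper, conditioned on the
interferer configuration: the signal fading gain is `G none`, the fading gain of
interferer `i ∈ s` is `G (some i)`, all jointly independent and exponential with rate 1;
with signal power `c·G none`, aggregate interference `I = ∑_{i∈s} cᵢ·G (some i)` and
noise `N₀`, the coverage probability `Pr[c·g/(I+N₀) > γ]` equals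
`exp(−γN₀/c) · ∏_{i∈s} 1/(1 + γcᵢ/c)`. -/
theorem coverage_prob_eq_noise_times_product
    {Ω ι : Type*} [MeasurableSpace Ω] [DecidableEq ι] (P : Measure Ω) [IsProbabilityMeasure P]
    (s : Finset ι) (G : Option ι → Ω → ℝ)
    (hmeas : ∀ j ∈ insert none (s.image some), Measurable (G j))
    (hLaw : ∀ j ∈ insert none (s.image some), P.map (G j) = expMeasure 1)
    (hindep : iIndepFun
        (fun j : (insert none (s.image some) : Finset (Option ι)) => G j) P)
    (c N₀ γ : ℝ) (hc : 0 < c) (hN₀ : 0 < N₀) (hγ : 0 < γ)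
    (cc : ι → ℝ) (hcc : ∀ i ∈ s, 0 ≤ cc i) :
    (P {ω | c * G none ω / ((∑ i ∈ s, cc i * G (some i) ω) + N₀) > γ}).toReal
      = Real.exp (-(γ * N₀) / c) * ∏ i ∈ s, 1 / (1 + γ * cc i / c) := by
  classical
  haveI : IsProbabilityMeasure (expMeasure 1) := isProbabilityMeasure_expMeasure one_pos
  set T : Finset (Option ι) := insert none (s.image some) with hT
  have hnone : (none : Option ι) ∈ T := Finset.mem_insert_self _ _
  have hsome : ∀ i ∈ s, some i ∈ T :=
    fun i hi => Finset.mem_insert_of_mem (Finset.mem_image_of_mem _ hi)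
  set b : ι → ℝ := fun i => γ * cc i / c with hbdef
  have hb : ∀ i ∈ s, 0 ≤ b i :=
    fun i hi => div_nonneg (mul_nonneg hγ.le (hcc i hi)) hc.le
  set t0 : ℝ := γ * N₀ / c with ht0def
  have ht0 : 0 < t0 := by positivity
  set Z : Ω → ℝ := fun ω => t0 + ∑ i ∈ s, b i * G (some i) ω with hZdef
  have hZ : Measurable Z :=
    measurable_const.add (Finset.measurable_sum s fun i hi =>
      (hmeas _ (hsome i hi)).const_mul _)
  have hmg : Measurable (G none) := hmeas none hnone
  -- a.e. nonnegativity of the interferer gains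
  have hpos : ∀ i ∈ s, ∀ᵐ ω ∂P, 0 ≤ G (some i) ω := by
    intro i hi
    have hm := hmeas _ (hsome i hi)
    have h0 : P (G (some i) ⁻¹' Set.Iio 0) = 0 := by
      rw [← Measure.map_apply hm measurableSet_Iio, hLaw _ (hsome i hi),
        my_expMeasure_Iio_zero]
    rw [ae_iff]
    convert h0 using 2
    ext ω
    simp [not_le]
  have hZae : ∀ᵐ ω ∂P, ∀ i ∈ s, 0 ≤ G (some i) ω := by
    have h := (ae_ball_iff s.countable_toSet).2 (fun i (hi : i ∈ (s : Set ι)) => hpos i hi)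
    filter_upwards [h] with ω hω i hi using hω i hi
  have hZnn : ∀ᵐ ω ∂P, 0 ≤ Z ω := by
    filter_upwards [hZae] with ω hω
    have : 0 ≤ ∑ i ∈ s, b i * G (some i) ω :=
      Finset.sum_nonneg fun i hi => mul_nonneg (hb i hi) (hω i hi)
    simp only [hZdef]
    linarith
  -- rewrite the event
  have hev : P {ω | c * G none ω / ((∑ i ∈ s, cc i * G (some i) ω) + N₀) > γ}
      = P {ω | Z ω < G none ω} := by
    apply measure_congr
    rw [Filter.eventuallyEq_set]
    filter_upwards [hZae] with ω hω
    have hI : 0 ≤ ∑ i ∈ s, cc i * G (some i) ω :=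
      Finset.sum_nonneg fun i hi => mul_nonneg (hcc i hi) (hω i hi)
    have hIN : 0 < (∑ i ∈ s, cc i * G (some i) ω) + N₀ := by linarith
    have hZeq : Z ω = γ * ((∑ i ∈ s, cc i * G (some i) ω) + N₀) / c := by
      simp only [hZdef, ht0def, hbdef]
      rw [mul_add, add_div, Finset.mul_sum, Finset.sum_div]
      rw [add_comm]
      congr 1
      exact Finset.sum_congr rfl fun i _ => by ring
    simp only [Set.mem_setOf_eq, gt_iff_lt]
    rw [lt_div_iff₀ hIN, hZeq, div_lt_iff₀ hc]
    constructor
    · intro h; linarith [h]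
    · intro h; linarith [h]
  -- independence of the signal gain and Z
  have hiZ : IndepFun (G none) Z P := by
    set j0 : {x // x ∈ T} := ⟨none, hnone⟩ with hj0
    set U : Finset {x // x ∈ T} := Finset.univ.erase j0 with hU
    have hdisj : Disjoint ({j0} : Finset {x // x ∈ T}) U :=
      Finset.disjoint_singleton_left.2 (fun h => (Finset.mem_erase.1 h).1 rfl)
    have hbase := hindep.indepFun_finset {j0} U hdisj (fun j => hmeas j j.2)
    have hmemU : ∀ i : {x // x ∈ s}, (⟨some i.1, hsome i.1 i.2⟩ : {x // x ∈ T}) ∈ U := by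
      intro i
      refine Finset.mem_erase.2 ⟨?_, Finset.mem_univ _⟩
      intro h
      exact Option.some_ne_none _ (congrArg Subtype.val h)
    let φ₁ : ({x // x ∈ ({j0} : Finset {x // x ∈ T})} → ℝ) → ℝ :=
      fun v => v ⟨j0, Finset.mem_singleton_self j0⟩
    let φ₂ : ({x // x ∈ U} → ℝ) → ℝ :=
      fun v => t0 + ∑ i ∈ s.attach, b i.1 * v ⟨⟨some i.1, hsome i.1 i.2⟩, hmemU i⟩
    have hφ₁ : Measurable φ₁ := measurable_pi_apply _
    have hφ₂ : Measurable φ₂ :=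
      measurable_const.add (Finset.measurable_sum _ fun i _ =>
        (measurable_pi_apply _).const_mul _)
    have := hbase.comp hφ₁ hφ₂
    have heq1 : (φ₁ ∘ fun a (i : ({j0} : Finset {x // x ∈ T})) => G i a) = G none := rfl
    have heq2 : (φ₂ ∘ fun a (i : (U : Finset {x // x ∈ T})) => G i a) = Z := by
      funext a
      simp only [Function.comp_apply, φ₂, hZdef]
      congr 1
      exact Finset.sum_attach s fun i => b i * G (some i) a
    rwa [heq1, heq2] at this
  -- main computation
  have hikey : P {ω | Z ω < G none ω} = ∫⁻ ω, ENNReal.ofReal (Real.exp (-Z ω)) ∂P := by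
    have hmap : P.map (fun ω => (Z ω, G none ω)) = (P.map Z).prod (P.map (G none)) :=
      (indepFun_iff_map_prod_eq_prod_map_map hZ.aemeasurable hmg.aemeasurable).1 hiZ.symm
    have hsetm : MeasurableSet {p : ℝ × ℝ | p.1 < p.2} :=
      measurableSet_lt measurable_fst measurable_snd
    have h1 : P {ω | Z ω < G none ω}
        = ((P.map Z).prod (P.map (G none))) {p : ℝ × ℝ | p.1 < p.2} := by
      rw [← hmap, Measure.map_apply (hZ.prodMk hmg) hsetm]
      rfl
    rw [h1, hLaw none hnone, Measure.prod_apply hsetm]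
    have hae : ∀ᵐ z ∂(P.map Z), 0 ≤ z := by
      rw [ae_map_iff hZ.aemeasurable measurableSet_Ici]
      exact hZnn
    calc ∫⁻ z, expMeasure 1 (Prod.mk z ⁻¹' {p : ℝ × ℝ | p.1 < p.2}) ∂(P.map Z)
        = ∫⁻ z, ENNReal.ofReal (Real.exp (-z)) ∂(P.map Z) := by
          apply lintegral_congr_ae
          filter_upwards [hae] with z hz
          have hsec : Prod.mk z ⁻¹' {p : ℝ × ℝ | p.1 < p.2} = Set.Ioi z := rfl
          rw [hsec, my_expMeasure_Ioi hz]
      _ = ∫⁻ ω, ENNReal.ofReal (Real.exp (-Z ω)) ∂P := by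
          rw [lintegral_map (measurable_neg.exp.ennreal_ofReal) hZ]
  -- factor the exponential
  set bb : Option ι → ℝ := fun o => o.elim 0 b with hbb
  set F : {x // x ∈ T} → Ω → ℝ≥0∞ :=
    fun j ω => ENNReal.ofReal (Real.exp (-(bb j.1 * G j.1 ω))) with hF
  have hFmeas : ∀ j, Measurable (F j) := fun j =>
    ENNReal.measurable_ofReal.comp (((hmeas j.1 j.2).const_mul _).neg.exp)
  have hFind : iIndepFun F P :=
    hindep.comp (fun j x => ENNReal.ofReal (Real.exp (-(bb j.1 * x))))
      (fun j => ENNReal.measurable_ofReal.comp (((measurable_id.const_mul _)).neg.exp))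
  set e : {x // x ∈ s} → {x // x ∈ T} := fun i => ⟨some i.1, hsome i.1 i.2⟩ with he
  have hinj : ∀ i ∈ s.attach, ∀ j ∈ s.attach, e i = e j → i = j := by
    intro i _ j _ h
    exact Subtype.ext (Option.some_injective _ (congrArg Subtype.val h))
  set u : Finset {x // x ∈ T} := s.attach.image e with hu
  have hfac : ∀ ω, ENNReal.ofReal (Real.exp (-Z ω))
      = ENNReal.ofReal (Real.exp (-t0)) * ∏ j ∈ u, F j ω := by
    intro ω
    have h1 : ∏ j ∈ u, F j ω = ∏ i ∈ s, ENNReal.ofReal (Real.exp (-(b i * G (some i) ω))) := by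
      rw [hu, Finset.prod_image hinj]
      exact Finset.prod_attach s fun i => ENNReal.ofReal (Real.exp (-(b i * G (some i) ω)))
    rw [h1, ← ENNReal.ofReal_prod_of_nonneg (fun i _ => Real.exp_nonneg _),
      ← ENNReal.ofReal_mul (Real.exp_nonneg _), ← Real.exp_sum, ← Real.exp_add]
    congr 1
    simp only [hZdef]
    rw [neg_add, ← Finset.sum_neg_distrib]
  have hprodint : ∫⁻ ω, ∏ j ∈ u, F j ω ∂P = ∏ j ∈ u, ∫⁻ ω, F j ω ∂P :=
    my_lintegral_prod hFmeas hFind u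
  have hone : ∀ i ∈ s, ∫⁻ ω, ENNReal.ofReal (Real.exp (-(b i * G (some i) ω))) ∂P
      = ENNReal.ofReal (1 / (1 + b i)) := by
    intro i hi
    rw [← lintegral_map (f := fun x : ℝ => ENNReal.ofReal (Real.exp (-(b i * x))))
      ((measurable_const.mul measurable_id).neg.exp.ennreal_ofReal) (hmeas _ (hsome i hi)), hLaw _ (hsome i hi)]
    exact my_laplace (hb i hi)
  have hfinal : P {ω | Z ω < G none ω}
      = ENNReal.ofReal (Real.exp (-t0)) * ∏ i ∈ s, ENNReal.ofReal (1 / (1 + b i)) := by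
    rw [hikey, lintegral_congr hfac, lintegral_const_mul _ (Finset.measurable_prod u
      fun j _ => hFmeas j), hprodint]
    congr 1
    rw [hu, Finset.prod_image hinj]
    calc ∏ x ∈ s.attach, ∫⁻ ω, F (e x) ω ∂P
        = ∏ x ∈ s.attach, ENNReal.ofReal (1 / (1 + b x.1)) :=
          Finset.prod_congr rfl fun x _ => hone x.1 x.2
      _ = ∏ i ∈ s, ENNReal.ofReal (1 / (1 + b i)) :=
          Finset.prod_attach s fun i => ENNReal.ofReal (1 / (1 + b i))
  rw [hev, hfinal, ENNReal.toReal_mul, ENNReal.toReal_ofReal (Real.exp_nonneg _),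
    ENNReal.toReal_prod]
  congr 1
  · rw [ht0def, neg_div]
  · refine Finset.prod_congr rfl fun i hi => ?_
    rw [ENNReal.toReal_ofReal (div_nonneg zero_le_one (by linarith [hb i hi]))]
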